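/- Let K be a field of characteristic 0. Then the Riordan group R′(K) is an algebraically complete URE-group: for every f ∈ K⟦x⟧ with constant coefficient 1, every g ∈ J(K), and every integer n ≥ 1, there exists a unique pair (α, ω) with α ∈ K⟦x⟧ of constant coefficient 1 and ω ∈ J(K) such that ω^[n] = g and α · (α ∘ ω) · (α ∘ ω^[2]) ⋯ (α ∘ ω^[n−1]) = f (equivalently, R(α,ω)^n = R(f,g)). -/

import Mathlib

/-!
Both equations are solved one coefficient at a time. If `ω ≡ ω' mod X ^ k` both lie in `J`,
then `ω^[n] - ω'^[n] ≡ n • (ω - ω') mod X ^ (k + 1)`; if `α ≡ α' mod X ^ k` both have constant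
coefficient `1`, then `∏ (α ∘ ω^[i]) - ∏ (α' ∘ ω^[i]) ≡ n • (α - α') mod X ^ (k + 1)`.
So in each equation the `k`-th coefficient of the left side is `n` times the `k`-th coefficient
of the unknown plus a function of its lower coefficients. As `n` is invertible in
characteristic `0`, the coefficients of `ω`, and then those of `α`, are determined recursively
and uniquely.
-/

open PowerSeries Finset

/-- Composition `f ∘ g` of formal power series (substitution of `g` into `f`).
This coefficientwise formula agrees with the usual substitution whenever the
constant coefficient of `g` is zero, since then `g ^ j` has order at least `j`. -/
noncomputable def psComp {Z : Type*} [CommRing Z] (f g : Z⟦X⟧) : Z⟦X⟧ :=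
  PowerSeries.mk fun n => ∑ j ∈ Finset.range (n + 1), coeff j f * coeff n (g ^ j)

noncomputable def psIter {Z : Type*} [CommRing Z] (ω : Z⟦X⟧) : ℕ → Z⟦X⟧
  | 0 => PowerSeries.X
  | m + 1 => psComp ω (psIter ω m)

section DvdAlgebra

variable {A : Type*} [CommRing A] {x : A}

theorem pow_succ_dvd_pow_sub_pow {a b : A} {k j : ℕ} (ha : x ∣ a) (hb : x ∣ b)
    (hab : x ^ k ∣ a - b) (hj : 2 ≤ j) : x ^ (k + 1) ∣ a ^ j - b ^ j := by
  obtain ⟨i, rfl⟩ : ∃ i, j = i + 1 := ⟨j - 1, by omega⟩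
  have hai : x ∣ a ^ i := dvd_pow ha (by omega)
  have hdiff : x ^ k ∣ a ^ i - b ^ i := hab.trans (sub_dvd_pow_sub_pow a b i)
  rw [show a ^ (i + 1) - b ^ (i + 1) = a ^ i * (a - b) + (a ^ i - b ^ i) * b by ring]
  exact dvd_add (pow_succ' x k ▸ mul_dvd_mul hai hab) (pow_succ x k ▸ mul_dvd_mul hdiff hb)

theorem dvd_prod_sub_one {ι : Type*} {s : Finset ι} {P : ι → A}
    (hP : ∀ i ∈ s, x ∣ P i - 1) : x ∣ ∏ i ∈ s, P i - 1 :=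
  Finset.prod_induction P (fun a => x ∣ a - 1)
    (fun a b ha hb => by
      rw [show a * b - 1 = a * (b - 1) + (a - 1) by ring]
      exact dvd_add (dvd_mul_of_dvd_right hb a) ha)
    (by simp) hP

theorem pow_succ_dvd_prod_sub_prod_sub_sum {ι : Type*} {k : ℕ} {P P' : ι → A} (s : Finset ι)
    (hP : ∀ i ∈ s, x ∣ P i - 1) (hP' : ∀ i ∈ s, x ∣ P' i - 1)
    (hPP' : ∀ i ∈ s, x ^ k ∣ P i - P' i) :
    x ^ (k + 1) ∣ ∏ i ∈ s, P i - ∏ i ∈ s, P' i - ∑ i ∈ s, (P i - P' i) := by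
  induction s using Finset.cons_induction with
  | empty => simp
  | cons i s hi ih =>
    simp only [Finset.forall_mem_cons] at hP hP' hPP'
    specialize ih hP.2 hP'.2 hPP'.2
    have hQ : x ∣ ∏ j ∈ s, P j - 1 := dvd_prod_sub_one hP.2
    have hQQ' : x ^ k ∣ ∏ j ∈ s, P j - ∏ j ∈ s, P' j := by
      have hsum : x ^ k ∣ ∑ j ∈ s, (P j - P' j) := Finset.dvd_sum hPP'.2
      simpa using dvd_add ((pow_dvd_pow x k.le_succ).trans ih) hsum
    rw [Finset.prod_cons, Finset.prod_cons, Finset.sum_cons,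
      show ∀ p p' q q' σ : A, p * q - p' * q' - (p - p' + σ)
          = (q - 1) * (p - p') + (p' - 1) * (q - q') + (q - q' - σ) by intros; ring]
    refine dvd_add (dvd_add ?_ ?_) ih
    · exact pow_succ' x k ▸ mul_dvd_mul hQ hPP'.1
    · exact pow_succ' x k ▸ mul_dvd_mul hP'.1 hQQ'

end DvdAlgebra

namespace PowerSeries

variable {R : Type*} [CommRing R]

theorem eq_zero_of_forall_X_pow_dvd {f : R⟦X⟧} (h : ∀ N, (X : R⟦X⟧) ^ N ∣ f) : f = 0 :=
  ext fun m => X_pow_dvd_iff.1 (h (m + 1)) m m.lt_succ_self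

theorem X_dvd_sub_one_iff {f : R⟦X⟧} : X ∣ f - 1 ↔ constantCoeff f = 1 := by
  rw [X_dvd_iff, map_sub, map_one, sub_eq_zero]

theorem X_sq_dvd_sub_X_iff {f : R⟦X⟧} :
    X ^ 2 ∣ f - X ↔ constantCoeff f = 0 ∧ coeff 1 f = 1 := by
  rw [X_pow_dvd_iff]
  constructor
  · intro h
    have h0 := h 0 (by norm_num)
    have h1 := h 1 (by norm_num)
    simp only [map_sub, coeff_zero_eq_constantCoeff_apply, constantCoeff_X, sub_zero,
      coeff_one_X, sub_eq_zero] at h0 h1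
    exact ⟨h0, h1⟩
  · rintro ⟨h0, h1⟩ m hm
    interval_cases m <;> simp [h0, h1]

theorem coeff_pow_self_of_constantCoeff_eq_zero {f : R⟦X⟧} (hf : constantCoeff f = 0)
    (j : ℕ) : coeff j (f ^ j) = coeff 1 f ^ j := by
  obtain ⟨g, rfl⟩ := X_dvd_iff.2 hf
  have h1 : coeff 1 (X * g) = constantCoeff g := by simp
  rw [h1, mul_pow, coeff_X_pow_mul', if_pos le_rfl, Nat.sub_self,
    coeff_zero_eq_constantCoeff_apply, map_pow]

end PowerSeries

section Composition

variable {R : Type*} [CommRing R]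

theorem coeff_psComp (f g : R⟦X⟧) (n : ℕ) :
    coeff n (psComp f g) = ∑ j ∈ range (n + 1), coeff j f * coeff n (g ^ j) := by
  simp [psComp]

theorem psComp_sub (f f' g : R⟦X⟧) : psComp (f - f') g = psComp f g - psComp f' g := by
  ext n
  simp [coeff_psComp, sub_mul]

theorem constantCoeff_psComp (f g : R⟦X⟧) : constantCoeff (psComp f g) = constantCoeff f := by
  rw [← coeff_zero_eq_constantCoeff_apply, ← coeff_zero_eq_constantCoeff_apply, coeff_psComp]
  simp

theorem coeff_one_psComp (f g : R⟦X⟧) : coeff 1 (psComp f g) = coeff 1 f * coeff 1 g := by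
  simp [coeff_psComp, sum_range_succ]

theorem constantCoeff_psIter {ω : R⟦X⟧} (hω : constantCoeff ω = 0) :
    ∀ m, constantCoeff (psIter ω m) = 0
  | 0 => constantCoeff_X
  | _ + 1 => by rw [psIter, constantCoeff_psComp, hω]

theorem coeff_one_psIter {ω : R⟦X⟧} (hω : coeff 1 ω = 1) :
    ∀ m, coeff 1 (psIter ω m) = 1
  | 0 => coeff_one_X
  | m + 1 => by rw [psIter, coeff_one_psComp, hω, coeff_one_psIter hω m, one_mul]

theorem X_pow_succ_dvd_psComp_sub_self {δ φ : R⟦X⟧} {k : ℕ} (hφ0 : constantCoeff φ = 0)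
    (hφ1 : coeff 1 φ = 1) (hδ : X ^ k ∣ δ) : X ^ (k + 1) ∣ psComp δ φ - δ := by
  rw [X_pow_dvd_iff] at hδ ⊢
  intro m hm
  rw [map_sub, coeff_psComp, sub_eq_zero, sum_eq_single_of_mem m (self_mem_range_succ m),
    coeff_pow_self_of_constantCoeff_eq_zero hφ0, hφ1, one_pow, mul_one]
  intro j hj hjm
  rw [hδ j (by have := mem_range.1 hj; omega), zero_mul]

theorem X_pow_succ_dvd_psComp_sub_psComp_sub {ψ φ φ' : R⟦X⟧} {k : ℕ} (hψ1 : coeff 1 ψ = 1)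
    (hφ0 : constantCoeff φ = 0) (hφ'0 : constantCoeff φ' = 0) (h : X ^ k ∣ φ - φ') :
    X ^ (k + 1) ∣ psComp ψ φ - psComp ψ φ' - (φ - φ') := by
  have hpow : ∀ j, 2 ≤ j → X ^ (k + 1) ∣ φ ^ j - φ' ^ j := fun j hj =>
    pow_succ_dvd_pow_sub_pow (X_dvd_iff.2 hφ0) (X_dvd_iff.2 hφ'0) h hj
  rw [X_pow_dvd_iff]
  intro m hm
  have hsum : coeff m (psComp ψ φ - psComp ψ φ')
      = ∑ j ∈ range (m + 1), coeff j ψ * coeff m (φ ^ j - φ' ^ j) := by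
    simp [coeff_psComp, mul_sub]
  rw [map_sub, hsum, sum_eq_single 1, pow_one, pow_one, hψ1, one_mul, sub_self]
  · intro j _ hj1
    rcases Nat.lt_or_ge j 2 with hj | hj
    · obtain rfl : j = 0 := by omega
      simp
    · rw [X_pow_dvd_iff.1 (hpow j hj) m hm, mul_zero]
  · intro h1
    obtain rfl : m = 0 := by simpa using h1
    simp [hφ0, hφ'0]

theorem X_pow_succ_dvd_psIter_sub_psIter_sub {ω ω' : R⟦X⟧} {k : ℕ}
    (hω0 : constantCoeff ω = 0) (hω1 : coeff 1 ω = 1)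
    (hω'0 : constantCoeff ω' = 0) (hω'1 : coeff 1 ω' = 1)
    (h : X ^ k ∣ ω - ω') (m : ℕ) :
    X ^ (k + 1) ∣ psIter ω m - psIter ω' m - m • (ω - ω') := by
  induction m with
  | zero => simp [psIter]
  | succ m ih =>
    have hD : X ^ k ∣ psIter ω m - psIter ω' m := by
      have hmδ : X ^ k ∣ m • (ω - ω') := by
        rw [nsmul_eq_mul]; exact dvd_mul_of_dvd_right h _
      simpa using dvd_add ((pow_dvd_pow X k.le_succ).trans ih) hmδ
    have hsplit : psIter ω (m + 1) - psIter ω' (m + 1) - (m + 1) • (ω - ω')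
        = (psComp (ω - ω') (psIter ω m) - (ω - ω'))
          + (psComp ω' (psIter ω m) - psComp ω' (psIter ω' m)
            - (psIter ω m - psIter ω' m))
          + (psIter ω m - psIter ω' m - m • (ω - ω')) := by
      rw [psComp_sub, psIter, psIter, succ_nsmul]
      ring
    rw [hsplit]
    refine dvd_add (dvd_add ?_ ?_) ih
    · exact X_pow_succ_dvd_psComp_sub_self (constantCoeff_psIter hω0 m)
        (coeff_one_psIter hω1 m) h
    · exact X_pow_succ_dvd_psComp_sub_psComp_sub hω'1 (constantCoeff_psIter hω0 m)
        (constantCoeff_psIter hω'0 m) hD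

theorem X_pow_succ_dvd_prod_psComp_sub {α α' ω : R⟦X⟧} {k : ℕ}
    (hα : constantCoeff α = 1) (hα' : constantCoeff α' = 1)
    (hω0 : constantCoeff ω = 0) (hω1 : coeff 1 ω = 1)
    (h : X ^ k ∣ α - α') (n : ℕ) :
    X ^ (k + 1) ∣ ∏ i ∈ range n, psComp α (psIter ω i)
      - ∏ i ∈ range n, psComp α' (psIter ω i) - n • (α - α') := by
  have hcomp : ∀ i,
      X ^ (k + 1) ∣ psComp α (psIter ω i) - psComp α' (psIter ω i) - (α - α') := fun i => by
    rw [← psComp_sub]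
    exact X_pow_succ_dvd_psComp_sub_self (constantCoeff_psIter hω0 i) (coeff_one_psIter hω1 i) h
  have hone : ∀ β : R⟦X⟧, constantCoeff β = 1 →
      ∀ i ∈ range n, X ∣ psComp β (psIter ω i) - 1 :=
    fun β hβ i _ => X_dvd_sub_one_iff.2 (by rw [constantCoeff_psComp, hβ])
  have hfactor : ∀ i ∈ range n, X ^ k ∣ psComp α (psIter ω i) - psComp α' (psIter ω i) :=
    fun i _ => by simpa using dvd_add ((pow_dvd_pow X k.le_succ).trans (hcomp i)) h
  have hsum :
      ∑ i ∈ range n, (psComp α (psIter ω i) - psComp α' (psIter ω i)) - n • (α - α')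
        = ∑ i ∈ range n, (psComp α (psIter ω i) - psComp α' (psIter ω i) - (α - α')) := by
    simp only [sum_sub_distrib, sum_const, card_range, smul_sub]
  rw [show ∀ a b c d : R⟦X⟧, a - b - d = (a - b - c) + (c - d) by intros; ring, hsum]
  exact dvd_add (pow_succ_dvd_prod_sub_prod_sub_sum _ (hone α hα) (hone α' hα') hfactor)
    (dvd_sum fun i _ => hcomp i)

end Composition

section Triangular

variable {R : Type*} [CommRing R]

/-- On the coset `b + X ^ k₀ R⟦X⟧`, every coefficient of `F φ` is `c` times the same coefficient
of `φ` plus a function of the lower coefficients of `φ`. -/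
def IsTriangular (F : R⟦X⟧ → R⟦X⟧) (c : R) (k₀ : ℕ) (b : R⟦X⟧) : Prop :=
  ∀ N φ ψ, X ^ k₀ ∣ φ - b → X ^ k₀ ∣ ψ - b → X ^ N ∣ φ - ψ →
    X ^ (N + 1) ∣ F φ - F ψ - c • (φ - ψ)

variable {F : R⟦X⟧ → R⟦X⟧} {c : R} {k₀ : ℕ} {b φ ψ : R⟦X⟧}

theorem IsTriangular.dvd_map_sub_map (hF : IsTriangular F c k₀ b) (hφ : X ^ k₀ ∣ φ - b)
    (hψ : X ^ k₀ ∣ ψ - b) {N : ℕ} (h : X ^ N ∣ φ - ψ) : X ^ N ∣ F φ - F ψ := by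
  have hcδ : X ^ N ∣ c • (φ - ψ) := by
    rw [smul_eq_C_mul]; exact dvd_mul_of_dvd_right h _
  simpa using dvd_add ((pow_dvd_pow X N.le_succ).trans (hF N φ ψ hφ hψ h)) hcδ

theorem IsTriangular.dvd_sub_of_dvd_map_sub_map (hF : IsTriangular F c k₀ b) (hc : IsUnit c)
    (hφ : X ^ k₀ ∣ φ - b) (hψ : X ^ k₀ ∣ ψ - b) {N : ℕ} (h : X ^ N ∣ F φ - F ψ) :
    X ^ N ∣ φ - ψ := by
  induction N with
  | zero => exact one_dvd _
  | succ N ih =>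
    have hlin := hF N φ ψ hφ hψ (ih ((pow_dvd_pow X N.le_succ).trans h))
    have hcδ : X ^ (N + 1) ∣ c • (φ - ψ) := by simpa using dvd_sub h hlin
    rwa [smul_eq_C_mul, (hc.map C).dvd_mul_left] at hcδ

theorem IsTriangular.exists_dvd_sub_map (hF : IsTriangular F c k₀ b) (hc : IsUnit c)
    {g : R⟦X⟧} (hg : X ^ k₀ ∣ g - F b) (N : ℕ) : ∃ φ, X ^ k₀ ∣ φ - b ∧ X ^ N ∣ g - F φ := by
  induction N with
  | zero => exact ⟨b, by simp, one_dvd _⟩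
  | succ N ih =>
    rcases le_or_gt (N + 1) k₀ with hN | hN
    · exact ⟨b, by simp, (pow_dvd_pow X hN).trans hg⟩
    obtain ⟨φ, hφ, r, hr⟩ := ih
    obtain ⟨u, rfl⟩ := hc
    set φ' := φ + C (↑u⁻¹ * constantCoeff r) * X ^ N
    have hφ'φ : X ^ N ∣ φ' - φ := Dvd.intro_left (C (↑u⁻¹ * constantCoeff r)) (by simp [φ'])
    have hφ' : X ^ k₀ ∣ φ' - b := by
      simpa using dvd_add ((pow_dvd_pow X (by omega)).trans hφ'φ) hφ
    refine ⟨φ', hφ', ?_⟩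
    have hcorr : (u : R) • (φ' - φ) = C (constantCoeff r) * X ^ N := by
      simp [φ', smul_eq_C_mul, ← mul_assoc, ← map_mul]
    have hsplit : g - F φ'
        = X ^ N * (r - C (constantCoeff r)) - (F φ' - F φ - (u : R) • (φ' - φ)) := by
      linear_combination hr - hcorr
    rw [hsplit, pow_succ]
    exact dvd_sub (mul_dvd_mul_left _ (X_dvd_iff.2 (by simp))) (hF N φ' φ hφ' hφ hφ'φ)

theorem IsTriangular.exists_map_eq (hF : IsTriangular F c k₀ b) (hc : IsUnit c) {g : R⟦X⟧}
    (hg : X ^ k₀ ∣ g - F b) : ∃ φ, X ^ k₀ ∣ φ - b ∧ F φ = g := by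
  choose φ hφb hφg using hF.exists_dvd_sub_map hc hg
  have hstable : ∀ {M N}, M ≤ N → X ^ M ∣ φ M - φ N := fun hMN =>
    hF.dvd_sub_of_dvd_map_sub_map hc (hφb _) (hφb _)
      (by simpa using dvd_sub ((pow_dvd_pow X hMN).trans (hφg _)) (hφg _))
  set φ_lim := mk fun j => coeff j (φ (j + 1))
  have hlim : ∀ N, X ^ N ∣ φ_lim - φ N := fun N => X_pow_dvd_iff.2 fun j hj => by
    rw [map_sub, coeff_mk, sub_eq_zero, ← sub_eq_zero, ← map_sub]
    exact X_pow_dvd_iff.1 (hstable hj) j j.lt_succ_self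
  have hlimb : X ^ k₀ ∣ φ_lim - b := by simpa using dvd_add (hlim k₀) (hφb k₀)
  refine ⟨φ_lim, hlimb, (sub_eq_zero.1 (eq_zero_of_forall_X_pow_dvd fun N => ?_)).symm⟩
  simpa using dvd_sub (hφg N) (hF.dvd_map_sub_map hlimb (hφb N) (hlim N))

theorem IsTriangular.existsUnique_map_eq (hF : IsTriangular F c k₀ b) (hc : IsUnit c)
    {g : R⟦X⟧} (hg : X ^ k₀ ∣ g - F b) : ∃! φ, X ^ k₀ ∣ φ - b ∧ F φ = g := by
  obtain ⟨φ, hφ⟩ := hF.exists_map_eq hc hg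
  refine ⟨φ, hφ, fun ψ hψ => sub_eq_zero.1 (eq_zero_of_forall_X_pow_dvd fun N => ?_)⟩
  refine hF.dvd_sub_of_dvd_map_sub_map hc hψ.1 hφ.1 ?_
  rw [hψ.2, hφ.2, sub_self]
  exact dvd_zero _

theorem isTriangular_psIter (n : ℕ) : IsTriangular (fun ω : R⟦X⟧ => psIter ω n) n 2 X := by
  intro N ω ω' hω hω' h
  rw [X_sq_dvd_sub_X_iff] at hω hω'
  rw [Nat.cast_smul_eq_nsmul]
  exact X_pow_succ_dvd_psIter_sub_psIter_sub hω.1 hω.2 hω'.1 hω'.2 h n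

theorem isTriangular_prod_psComp {ω : R⟦X⟧} (hω0 : constantCoeff ω = 0) (hω1 : coeff 1 ω = 1)
    (n : ℕ) :
    IsTriangular (fun α : R⟦X⟧ => ∏ i ∈ range n, psComp α (psIter ω i)) n 1 1 := by
  intro N α α' hα hα' h
  rw [pow_one, X_dvd_sub_one_iff] at hα hα'
  rw [Nat.cast_smul_eq_nsmul]
  exact X_pow_succ_dvd_prod_psComp_sub hα hα' hω0 hω1 h n

end Triangular

/-- for a field `K` of characteristic 0, the Riordan group `ℛ′(K)` is an
algebraically complete URE-group: for every `R(f,g)` with `f(0) = 1` and `g ∈ 𝒥(K)` and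
every `n ≥ 1`, there is a unique pair `(α, ω)` with `α(0) = 1`, `ω ∈ 𝒥(K)`, `ω^[n] = g`
and `∏_{i=0}^{n−1} (α ∘ ω^[i]) = f` (i.e. `R(α,ω)^n = R(f,g)`). -/
theorem riordan_group_char_zero_complete_URE {K : Type*} [Field K] [CharZero K]
    (f : K⟦X⟧) (hf : constantCoeff f = 1)
    (g : K⟦X⟧) (hg0 : constantCoeff g = 0) (hg1 : coeff 1 g = 1)
    (n : ℕ) (hn : 1 ≤ n) :
    ∃! p : K⟦X⟧ × K⟦X⟧,
      (constantCoeff p.1 = 1 ∧ constantCoeff p.2 = 0 ∧ coeff 1 p.2 = 1) ∧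
        psIter p.2 n = g ∧ ∏ i ∈ Finset.range n, psComp p.1 (psIter p.2 i) = f := by
  have hnK : IsUnit (n : K) := (Nat.cast_ne_zero.2 (by omega)).isUnit
  have hgX : X ^ 2 ∣ g - psIter X n := by
    have hX : X ^ 2 ∣ psIter (X : K⟦X⟧) n - X := X_sq_dvd_sub_X_iff.2
      ⟨constantCoeff_psIter constantCoeff_X n, coeff_one_psIter coeff_one_X n⟩
    simpa using dvd_sub (X_sq_dvd_sub_X_iff.2 ⟨hg0, hg1⟩) hX
  obtain ⟨ω, ⟨hωJ, hωg⟩, hω_unique⟩ := (isTriangular_psIter n).existsUnique_map_eq hnK hgX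
  obtain ⟨hω0, hω1⟩ := X_sq_dvd_sub_X_iff.1 hωJ
  have hf1 : X ^ 1 ∣ f - ∏ i ∈ range n, psComp 1 (psIter ω i) := by
    simp [X_dvd_iff, constantCoeff_psComp, hf]
  obtain ⟨α, ⟨hα1, hαf⟩, hα_unique⟩ :=
    (isTriangular_prod_psComp hω0 hω1 n).existsUnique_map_eq hnK hf1
  rw [pow_one, X_dvd_sub_one_iff] at hα1
  refine ⟨(α, ω), ⟨⟨hα1, hω0, hω1⟩, hωg, hαf⟩, ?_⟩
  rintro ⟨α', ω'⟩ ⟨⟨hα', hω'0, hω'1⟩, hω'g, hα'f⟩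
  obtain rfl : ω' = ω := hω_unique ω' ⟨X_sq_dvd_sub_X_iff.2 ⟨hω'0, hω'1⟩, hω'g⟩
  obtain rfl : α' = α := hα_unique α' ⟨by rwa [pow_one, X_dvd_sub_one_iff], hα'f⟩
  rfl
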